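/- arXiv:math/0611823 — 7 statements merged into one kernel-verified Lean document; each statement's English description precedes it below -/
import Mathlib

section
/- Let α ∈ (0, π/4) and let k be a positive integer with k ≤ (cot²(α)-1)² / (2cot²(α)-1). Then the function T_k(s) = s + k·v(s), where v(s) = π + 2·arctan( sin(s)/(cos(s)+cot²(α)) ), is strictly increasing on [0, π]. -/
/-! With `c = cot² α > 1`, `T_k' s = 1 + 2k (1 + c cos s) / (1 + 2c cos s + c²)`. After clearing
the positive denominator the numerator is affine in `cos s`, with value `(c - 1)(c - 1 - 2k)` at
`cos s = -1`; since `(c - 1)² / (2c - 1) < (c - 1) / 2`, the bound on `k` makes it positive, so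
`T_k` is strictly increasing on all of `ℝ`. -/

open Real Set

lemma one_lt_cot_sq_of_mem_Ioo {α : ℝ} (hα : α ∈ Ioo 0 (π / 4)) : 1 < cot α ^ 2 := by
  obtain ⟨hα0, hα4⟩ := hα
  have htan_pos : 0 < tan α := tan_pos_of_pos_of_lt_pi_div_two hα0 (by linarith [pi_pos])
  have htan_lt : tan α < 1 := tan_pi_div_four ▸
    tan_lt_tan_of_lt_of_lt_pi_div_two (by linarith [pi_pos]) (by linarith [pi_pos]) hα4
  have hcot : cot α = (tan α)⁻¹ := by
    rw [cot_eq_cos_div_sin, tan_eq_sin_div_cos, inv_div]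
  have : 1 < cot α := hcot ▸ (one_lt_inv₀ htan_pos).2 htan_lt
  nlinarith

lemma two_mul_lt_sub_one_of_le_sq_div {c k : ℝ} (hc : 1 < c)
    (hk : k ≤ (c - 1) ^ 2 / (2 * c - 1)) :
    2 * k < c - 1 := by
  rw [le_div_iff₀ (by linarith)] at hk
  nlinarith

lemma hasDerivAt_arctan_sin_div_cos_add {c : ℝ} (hc : 1 < c) (s : ℝ) :
    HasDerivAt (fun s => arctan (sin s / (cos s + c)))
      ((1 + c * cos s) / (1 + 2 * c * cos s + c ^ 2)) s := by
  have hden : cos s + c ≠ 0 := by linarith [neg_one_le_cos s]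
  have hsq : 1 + 2 * c * cos s + c ^ 2 = (cos s + c) ^ 2 + sin s ^ 2 := by
    linear_combination -sin_sq_add_cos_sq s
  have hnum : 1 + c * cos s = cos s * (cos s + c) - sin s * -sin s := by
    linear_combination -sin_sq_add_cos_sq s
  convert ((hasDerivAt_sin s).fun_div ((hasDerivAt_cos s).add_const c) hden).arctan using 1
  rw [hsq, hnum]
  field_simp

lemma one_add_mul_two_mul_div_pos {c k s : ℝ} (hk : 0 ≤ k) (hkc : 2 * k < c - 1) :
    0 < 1 + k * (2 * ((1 + c * cos s) / (1 + 2 * c * cos s + c ^ 2))) := by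
  have hc : 1 < c := by linarith
  have hcos := neg_one_le_cos s
  have hden : 0 < 1 + 2 * c * cos s + c ^ 2 := by nlinarith
  have hnum : 0 < 1 + 2 * c * cos s + c ^ 2 + 2 * k * (1 + c * cos s) := by
    nlinarith [mul_nonneg (by positivity : 0 ≤ c * (1 + k)) (by linarith : 0 ≤ 1 + cos s),
      mul_pos (by linarith : 0 < c - 1) (by linarith : 0 < c - 1 - 2 * k)]
  have : 1 + k * (2 * ((1 + c * cos s) / (1 + 2 * c * cos s + c ^ 2)))
      = (1 + 2 * c * cos s + c ^ 2 + 2 * k * (1 + c * cos s)) / (1 + 2 * c * cos s + c ^ 2) := by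
    field_simp
  rw [this]
  exact div_pos hnum hden

lemma strictMono_add_mul_pi_add_two_mul_arctan {c k : ℝ} (hk : 0 ≤ k) (hkc : 2 * k < c - 1) :
    StrictMono fun s => s + k * (π + 2 * arctan (sin s / (cos s + c))) := by
  refine strictMono_of_deriv_pos fun s => ?_
  have hc : 1 < c := by linarith
  have hderiv := (hasDerivAt_id' s).fun_add
    (((hasDerivAt_arctan_sin_div_cos_add hc s).const_mul 2).const_add π |>.const_mul k)
  rw [hderiv.deriv]
  exact one_add_mul_two_mul_div_pos hk hkc

theorem stmt_5_general (α : ℝ) (hα : α ∈ Set.Ioo 0 (π / 4)) (k : ℕ)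
    (hkle : (k : ℝ) ≤ ((Real.cot α) ^ 2 - 1) ^ 2 / (2 * (Real.cot α) ^ 2 - 1))
    (v T : ℝ → ℝ)
    (hv : ∀ s, v s = π + 2 * Real.arctan (Real.sin s / (Real.cos s + (Real.cot α) ^ 2)))
    (hT : ∀ s, T s = s + k * v s) :
    StrictMonoOn T (Set.Icc 0 π) := by
  have hc := one_lt_cot_sq_of_mem_Ioo hα
  have hT_eq : T = fun s => s + k * (π + 2 * arctan (sin s / (cos s + cot α ^ 2))) := by
    funext s
    rw [hT, hv]
  rw [hT_eq]
  exact (strictMono_add_mul_pi_add_two_mul_arctan k.cast_nonneg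
    (two_mul_lt_sub_one_of_le_sq_div hc hkle)).strictMonoOn _

theorem stmt_5 (α : ℝ) (hα : α ∈ Set.Ioo 0 (π / 4)) (k : ℕ) (hk : 0 < k)
    (hkle : (k : ℝ) ≤ ((Real.cot α) ^ 2 - 1) ^ 2 / (2 * (Real.cot α) ^ 2 - 1))
    (v T : ℝ → ℝ)
    (hv : ∀ s, v s = π + 2 * Real.arctan (Real.sin s / (Real.cos s + (Real.cot α) ^ 2)))
    (hT : ∀ s, T s = s + k * v s) :
    StrictMonoOn T (Set.Icc 0 π) :=
  stmt_5_general α hα k hkle v T hv hT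
end

section
/- Let ρ ∈ (0,2] and suppose z ∈ ℂ, t ∈ ℝ, s ∈ [0,π), s' ∈ [π,2π) satisfy z = -ρe^{i(t-s)} + 1 - e^{it} and z = -ρe^{i(t-s')} - 1 + e^{it}. Then, writing z = z₁ + iz₂, the point (z₁, z₂) satisfies z₁⁴ + z₂⁴ + 2z₁²z₂² - ρ²z₁² + (4-ρ²)z₂² = 0. -/
/-! With `w = e^{it}`, the two equations say that `z + (w - 1)` and `z - (w - 1)` both have
modulus `ρ`. Hence `z ⊥ w - 1` and `|z|² + |w - 1|² = ρ²`, that is `x (1 - cos t) = y sin t` and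
`|z|² + 2 (1 - cos t) = ρ²`; squaring the first and dividing by `1 - cos t` eliminates `t` and
leaves the quartic. When `w = 1` the elimination fails, but then `z = -ρ e^{-is} = -ρ e^{-is'}`,
so `Im z = ρ sin s = ρ sin s'` is both `≥ 0` and `≤ 0`: `z` is real with `|z| = ρ`. -/

open Complex Real

lemma quartic_eq_zero_of_chord {x y c d r : ℝ} (hcd : c ^ 2 + d ^ 2 = 1) (hc : c ≠ 1)
    (h_add : (x + (c - 1)) ^ 2 + (y + d) ^ 2 = r) (h_sub : (x - (c - 1)) ^ 2 + (y - d) ^ 2 = r) :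
    x ^ 4 + y ^ 4 + 2 * x ^ 2 * y ^ 2 - r * x ^ 2 + (4 - r) * y ^ 2 = 0 := by
  have h_orth : x * (1 - c) = y * d := by linear_combination (h_sub - h_add) / 4
  have h_norm : x ^ 2 + y ^ 2 + 2 * (1 - c) = r := by linear_combination (h_add + h_sub) / 2 - hcd
  have h_sq : x ^ 2 * (1 - c) = y ^ 2 * (1 + c) := by
    refine mul_left_cancel₀ (sub_ne_zero.2 hc.symm) ?_
    linear_combination (x * (1 - c) + y * d) * h_orth + y ^ 2 * hcd
  linear_combination (x ^ 2 + y ^ 2) * h_norm - 2 * h_sq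

lemma eq_zero_of_eq_mul_sin_of_eq_mul_sin {y ρ s s' : ℝ} (hs : s ∈ Set.Ico 0 π)
    (hs' : s' ∈ Set.Ico π (2 * π)) (h : y = ρ * Real.sin s) (h' : y = ρ * Real.sin s') :
    y = 0 := by
  have hsin : 0 ≤ Real.sin s := sin_nonneg_of_nonneg_of_le_pi hs.1 hs.2.le
  have hsin' : Real.sin s' ≤ 0 := by
    rw [← Real.sin_sub_two_pi]
    exact sin_nonpos_of_nonpos_of_neg_pi_le (by linarith [hs'.2]) (by linarith [hs'.1])
  have hy_sq : y ^ 2 ≤ 0 :=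
    calc y ^ 2 = ρ ^ 2 * (Real.sin s * Real.sin s') := by
          linear_combination y * h' + ρ * Real.sin s' * h
      _ ≤ 0 := mul_nonpos_of_nonneg_of_nonpos (sq_nonneg ρ)
          (mul_nonpos_of_nonneg_of_nonpos hsin hsin')
  exact pow_eq_zero_iff two_ne_zero |>.1 (le_antisymm hy_sq (sq_nonneg y))

lemma re_im_of_eq_neg_mul_exp_add {z : ℂ} {ρ t s u : ℝ}
    (h : z = -ρ * exp (I * (t - s)) + u * (1 - exp (I * t))) :
    z.re = -ρ * Real.cos (t - s) + u * (1 - Real.cos t) ∧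
      z.im = -ρ * Real.sin (t - s) - u * Real.sin t := by
  subst h
  simp only [mul_comm I, ← ofReal_sub, add_re, add_im, mul_re, mul_im, neg_re, neg_im, sub_re,
    sub_im, ofReal_re, ofReal_im, one_re, one_im, exp_ofReal_mul_I_re, exp_ofReal_mul_I_im]
  constructor <;> ring

theorem stmt_8_general (ρ : ℝ) (z : ℂ) (t s s' : ℝ)
    (hs : s ∈ Set.Ico 0 π) (hs' : s' ∈ Set.Ico π (2 * π))
    (h1 : z = -(ρ : ℂ) * Complex.exp (Complex.I * (t - s)) + 1 - Complex.exp (Complex.I * t))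
    (h2 : z = -(ρ : ℂ) * Complex.exp (Complex.I * (t - s')) - 1 + Complex.exp (Complex.I * t)) :
    z.re ^ 4 + z.im ^ 4 + 2 * z.re ^ 2 * z.im ^ 2 - ρ ^ 2 * z.re ^ 2
      + (4 - ρ ^ 2) * z.im ^ 2 = 0 := by
  obtain ⟨hre₁, him₁⟩ := re_im_of_eq_neg_mul_exp_add (ρ := ρ) (t := t) (s := s) (u := 1)
    (h1.trans (by push_cast; ring))
  obtain ⟨hre₂, him₂⟩ := re_im_of_eq_neg_mul_exp_add (ρ := ρ) (t := t) (s := s') (u := -1)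
    (h2.trans (by push_cast; ring))
  have h_add : (z.re + (Real.cos t - 1)) ^ 2 + (z.im + Real.sin t) ^ 2 = ρ ^ 2 := by
    rw [hre₁, him₁]; linear_combination ρ ^ 2 * Real.sin_sq_add_cos_sq (t - s)
  have h_sub : (z.re - (Real.cos t - 1)) ^ 2 + (z.im - Real.sin t) ^ 2 = ρ ^ 2 := by
    rw [hre₂, him₂]; linear_combination ρ ^ 2 * Real.sin_sq_add_cos_sq (t - s')
  by_cases hc : Real.cos t = 1
  · have hsin : Real.sin t = 0 := by nlinarith [Real.sin_sq_add_cos_sq t]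
    have him : z.im = 0 := eq_zero_of_eq_mul_sin_of_eq_mul_sin hs hs'
      (by rw [him₁, Real.sin_sub, hc, hsin]; ring) (by rw [him₂, Real.sin_sub, hc, hsin]; ring)
    rw [hc, hsin, him] at h_add
    rw [him]
    linear_combination z.re ^ 2 * h_add
  · exact quartic_eq_zero_of_chord (Real.sin_sq_add_cos_sq t ▸ by ring) hc h_add h_sub

theorem stmt_8 (ρ : ℝ) (hρ : ρ ∈ Set.Ioc 0 2) (z : ℂ) (t s s' : ℝ)
    (hs : s ∈ Set.Ico 0 π) (hs' : s' ∈ Set.Ico π (2 * π))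
    (h1 : z = -(ρ : ℂ) * Complex.exp (Complex.I * (t - s)) + 1 - Complex.exp (Complex.I * t))
    (h2 : z = -(ρ : ℂ) * Complex.exp (Complex.I * (t - s')) - 1 + Complex.exp (Complex.I * t)) :
    z.re ^ 4 + z.im ^ 4 + 2 * z.re ^ 2 * z.im ^ 2 - ρ ^ 2 * z.re ^ 2
      + (4 - ρ ^ 2) * z.im ^ 2 = 0 :=
  stmt_8_general ρ z t s s' hs hs' h1 h2
end

section
/- Let Φ : ℝⁿ → ℝⁿ be a C¹ map and K ⊂ ℝⁿ a compact set such that Φ restricted to K is injective and the differential DΦ(x) is invertible for every x ∈ K. Then there exists an open neighborhood U ⊇ K such that Φ restricted to U is a C¹ diffeomorphism onto its image. -/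
/-!
At each point where the derivative is invertible the inverse function theorem makes `Φ` a local
homeomorphism, so `Φ` is injective near every point of `K`; together with injectivity on `K` and
compactness this gives injectivity on a whole open neighbourhood `U₀` of `K`. On
`U = U₀ ∩ {DΦ invertible}`, which is open because invertibility is an open condition, `Φ` is an
injective open map, hence an open partial homeomorphism onto `Φ '' U`, and the inverse of such a
homeomorphism is as smooth as `Φ` wherever the derivative of `Φ` is invertible.
-/

open Set

section InverseOnOpenSet

variable {𝕜 : Type*} [NontriviallyNormedField 𝕜]
  {E : Type*} [NormedAddCommGroup E] [NormedSpace 𝕜 E] [CompleteSpace E]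
  {F : Type*} [NormedAddCommGroup F] [NormedSpace 𝕜 F] {f : E → F}

theorem isOpen_image_of_hasStrictFDerivAt_equiv {U : Set E} (hU : IsOpen U)
    (hf : ∀ x ∈ U, ∃ e : E ≃L[𝕜] F, HasStrictFDerivAt f (e : E →L[𝕜] F) x) :
    IsOpen (f '' U) := by
  rw [isOpen_iff_mem_nhds]
  rintro _ ⟨x, hx, rfl⟩
  obtain ⟨e, he⟩ := hf x hx
  rw [← he.map_nhds_eq_of_equiv]
  exact Filter.image_mem_map (hU.mem_nhds hx)

theorem Set.InjOn.exists_isOpen_superset_of_hasStrictFDerivAt_equiv {K : Set E}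
    (hinj : InjOn f K) (hK : IsCompact K)
    (hf : ∀ x ∈ K, ∃ e : E ≃L[𝕜] F, HasStrictFDerivAt f (e : E →L[𝕜] F) x) :
    ∃ U, IsOpen U ∧ K ⊆ U ∧ InjOn f U := by
  refine hinj.exists_isOpen_superset hK
    (fun x hx ↦ (hf x hx).elim fun _ he ↦ he.continuousAt) fun x hx ↦ ?_
  obtain ⟨e, he⟩ := hf x hx
  exact ⟨_, (he.toOpenPartialHomeomorph f).open_source.mem_nhds
    he.mem_toOpenPartialHomeomorph_source, (he.toOpenPartialHomeomorph f).injOn⟩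

theorem Set.InjOn.contDiffOn_invFunOn_image {n : WithTop ℕ∞} {U : Set E} (hU : IsOpen U)
    (hinj : InjOn f U) (hf : ContDiffOn 𝕜 n f U)
    (hf' : ∀ x ∈ U, ∃ e : E ≃L[𝕜] F, HasStrictFDerivAt f (e : E →L[𝕜] F) x) :
    ContDiffOn 𝕜 n (Function.invFunOn f U) (f '' U) := by
  have hopen : IsOpenMap (U.domRestrict f) := fun W hW ↦ by
    rw [domRestrict_eq, image_comp]
    exact isOpen_image_of_hasStrictFDerivAt_equiv (hU.isOpenMap_subtype_val W hW)
      fun x ⟨y, _, hy⟩ ↦ hy ▸ hf' y y.2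
  let φ := OpenPartialHomeomorph.ofContinuousOpenRestrict (hinj.toPartialEquiv f U)
    (fun x hx ↦ (hf' x hx).elim fun _ he ↦ he.continuousAt.continuousWithinAt) hopen hU
  rintro _ ⟨x, hx, rfl⟩
  have hsymm : φ.symm (f x) = x := hinj.leftInvOn_invFunOn hx
  obtain ⟨e, he⟩ := hf' x hx
  refine (φ.contDiffAt_symm (f₀' := e) (mem_image_of_mem f hx) ?_ ?_).contDiffWithinAt <;>
    rw [hsymm]
  · exact he.hasFDerivAt
  · exact hf.contDiffAt (hU.mem_nhds hx)

end InverseOnOpenSet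

theorem ContDiff.isOpen_setOf_hasStrictFDerivAt_equiv {𝕜 : Type*} [RCLike 𝕜]
    {E : Type*} [NormedAddCommGroup E] [NormedSpace 𝕜 E] [CompleteSpace E]
    {F : Type*} [NormedAddCommGroup F] [NormedSpace 𝕜 F] {f : E → F} {n : WithTop ℕ∞}
    (hf : ContDiff 𝕜 n f) (hn : n ≠ 0) :
    IsOpen {x | ∃ e : E ≃L[𝕜] F, HasStrictFDerivAt f (e : E →L[𝕜] F) x} := by
  have hset : {x | ∃ e : E ≃L[𝕜] F, HasStrictFDerivAt f (e : E →L[𝕜] F) x} =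
      fderiv 𝕜 f ⁻¹' range ((↑) : (E ≃L[𝕜] F) → E →L[𝕜] F) := by
    ext x
    constructor
    · rintro ⟨e, he⟩
      exact ⟨e, he.hasFDerivAt.fderiv.symm⟩
    · rintro ⟨e, he⟩
      exact ⟨e, he ▸ hf.contDiffAt.hasStrictFDerivAt hn⟩
  rw [hset]
  exact ContinuousLinearEquiv.isOpen.preimage (hf.continuous_fderiv hn)

theorem stmt_12_general (n : ℕ)
    (Φ : EuclideanSpace ℝ (Fin n) → EuclideanSpace ℝ (Fin n))
    (hΦ : ContDiff ℝ 1 Φ)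
    (K : Set (EuclideanSpace ℝ (Fin n))) (hK : IsCompact K)
    (hinj : Set.InjOn Φ K)
    (hder : ∀ x ∈ K, Function.Bijective (fderiv ℝ Φ x)) :
    ∃ U : Set (EuclideanSpace ℝ (Fin n)), IsOpen U ∧ K ⊆ U ∧
      Set.InjOn Φ U ∧ IsOpen (Φ '' U) ∧
      ∃ g : EuclideanSpace ℝ (Fin n) → EuclideanSpace ℝ (Fin n),
        ContDiffOn ℝ 1 g (Φ '' U) ∧
        (∀ x ∈ U, g (Φ x) = x) ∧ (∀ y ∈ Φ '' U, Φ (g y) = y) := by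
  set V := {x | ∃ e : EuclideanSpace ℝ (Fin n) ≃L[ℝ] EuclideanSpace ℝ (Fin n),
    HasStrictFDerivAt Φ (e : EuclideanSpace ℝ (Fin n) →L[ℝ] EuclideanSpace ℝ (Fin n)) x}
  have hKV : K ⊆ V := fun x hx ↦ by
    obtain ⟨u, hu⟩ := ContinuousLinearMap.isUnit_iff_bijective.2 (hder x hx)
    have hΦx := hΦ.contDiffAt.hasStrictFDerivAt (x := x) one_ne_zero
    rw [← hu] at hΦx
    exact ⟨.ofUnit u, hΦx⟩
  obtain ⟨U₀, hU₀, hKU₀, hinjU₀⟩ :=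
    hinj.exists_isOpen_superset_of_hasStrictFDerivAt_equiv hK hKV
  have hU : IsOpen (U₀ ∩ V) := hU₀.inter (hΦ.isOpen_setOf_hasStrictFDerivAt_equiv one_ne_zero)
  have hinjU : InjOn Φ (U₀ ∩ V) := hinjU₀.mono inter_subset_left
  have hUV : U₀ ∩ V ⊆ V := inter_subset_right
  refine ⟨U₀ ∩ V, hU, subset_inter hKU₀ hKV, hinjU,
    isOpen_image_of_hasStrictFDerivAt_equiv hU hUV, Function.invFunOn Φ (U₀ ∩ V),
    hinjU.contDiffOn_invFunOn_image hU hΦ.contDiffOn hUV,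
    fun x hx ↦ hinjU.leftInvOn_invFunOn hx, (surjOn_image Φ _).rightInvOn_invFunOn⟩

theorem stmt_12 (n : ℕ) (hn : 0 < n)
    (Φ : EuclideanSpace ℝ (Fin n) → EuclideanSpace ℝ (Fin n))
    (hΦ : ContDiff ℝ 1 Φ)
    (K : Set (EuclideanSpace ℝ (Fin n))) (hK : IsCompact K)
    (hinj : Set.InjOn Φ K)
    (hder : ∀ x ∈ K, Function.Bijective (fderiv ℝ Φ x)) :
    ∃ U : Set (EuclideanSpace ℝ (Fin n)), IsOpen U ∧ K ⊆ U ∧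
      Set.InjOn Φ U ∧ IsOpen (Φ '' U) ∧
      ∃ g : EuclideanSpace ℝ (Fin n) → EuclideanSpace ℝ (Fin n),
        ContDiffOn ℝ 1 g (Φ '' U) ∧
        (∀ x ∈ U, g (Φ x) = x) ∧ (∀ y ∈ Φ '' U, Φ (g y) = y) :=
  stmt_12_general n Φ hΦ K hK hinj hder
end

section
/- Let Φ : ℝⁿ → ℝⁿ be C¹, K compact with Φ|_K injective and DΦ invertible on K, and U ⊇ K an open set on which Φ is a C¹ diffeomorphism onto its image. Let (Φ_k) be a sequence of C¹ maps converging to Φ in C¹ on compact subsets. Then for every open set Ũ with compact closure contained in U, there exists k̄ such that for all k ≥ k̄, Φ_k restricted to Ũ is injective with everywhere invertible differential. -/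
/-!
The limit map `Φ` is uniformly expanding on the compact set `C = closure V`: near the diagonal
this is the inverse function theorem (a strict derivative that is an isomorphism makes `Φ`
locally anti-Lipschitz), away from it it is injectivity plus compactness. A `C¹`-small
perturbation `Φₖ - Φ` cannot undo a uniform expansion: on short segments its derivative is
small (mean value inequality), on long ones its size is. Invertibility of `DΦₖ` is stable
because invertible operators form an open set containing the compact image `DΦ(C)`.
-/

open Set Filter Metric Topology Function
open scoped NNReal

theorem IsCompact.exists_pos_mul_dist_le_dist {X Y : Type*} [MetricSpace X] [MetricSpace Y]
    {f : X → Y} {C : Set X} (hC : IsCompact C) (hf : Continuous f) (hinj : InjOn f C)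
    (hloc : ∀ a ∈ C, ∃ K : ℝ≥0, ∃ s ∈ 𝓝 a, AntilipschitzWith K (s.domRestrict f)) :
    ∃ c > (0 : ℝ), ∀ x ∈ C, ∀ y ∈ C, c * dist x y ≤ dist (f x) (f y) := by
  suffices ∃ c > (0 : ℝ), ∀ z ∈ C ×ˢ C, c * dist z.1 z.2 ≤ dist (f z.1) (f z.2) by
    obtain ⟨c, hc, h⟩ := this
    exact ⟨c, hc, fun x hx y hy => h (x, y) ⟨hx, hy⟩⟩
  refine (hC.prod hC).induction_on
    (p := fun t => ∃ c > (0 : ℝ), ∀ z ∈ t, c * dist z.1 z.2 ≤ dist (f z.1) (f z.2))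
    ⟨1, one_pos, by simp⟩ (fun s t hst ⟨c, hc, h⟩ => ⟨c, hc, fun z hz => h z (hst hz)⟩) ?_ ?_
  · rintro s t ⟨c, hc, hs⟩ ⟨d, hd, ht⟩
    refine ⟨min c d, lt_min hc hd, ?_⟩
    rintro z (hz | hz)
    · exact (mul_le_mul_of_nonneg_right (min_le_left c d) dist_nonneg).trans (hs z hz)
    · exact (mul_le_mul_of_nonneg_right (min_le_right c d) dist_nonneg).trans (ht z hz)
  rintro ⟨a, b⟩ ⟨ha, hb⟩
  rcases eq_or_ne a b with rfl | hab
  · obtain ⟨K, s, hs, hK⟩ := hloc a ha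
    refine ⟨s ×ˢ s, mem_nhdsWithin_of_mem_nhds (prod_mem_nhds hs hs),
      ((K : ℝ) + 1)⁻¹, by positivity, ?_⟩
    rintro ⟨x, y⟩ ⟨hx, hy⟩
    rw [inv_mul_le_iff₀ (by positivity)]
    calc dist x y ≤ K * dist (f x) (f y) := hK.le_mul_dist ⟨x, hx⟩ ⟨y, hy⟩
      _ ≤ (K + 1) * dist (f x) (f y) := by gcongr; linarith
  · have hfab : 0 < dist (f a) (f b) := dist_pos.2 (hinj.ne ha hb hab)
    set c := dist (f a) (f b) / (2 * dist a b)
    have hdab : 0 < dist a b := dist_pos.2 hab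
    have hc : 0 < c := by positivity
    have hlt : c * dist a b < dist (f a) (f b) :=
      calc c * dist a b = dist (f a) (f b) / 2 := by simp only [c]; field_simp
        _ < dist (f a) (f b) := half_lt_self hfab
    have hev : ∀ᶠ z : X × X in 𝓝 (a, b), c * dist z.1 z.2 < dist (f z.1) (f z.2) :=
      ((continuous_const.mul (continuous_fst.dist continuous_snd)).continuousAt).eventually_lt
        ((hf.comp continuous_fst).dist (hf.comp continuous_snd)).continuousAt hlt
    exact ⟨_, mem_nhdsWithin_of_mem_nhds hev, c, hc, fun z hz => le_of_lt hz⟩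

theorem TendstoUniformlyOn.eventually_mapsTo {ι X Y : Type*} [TopologicalSpace X]
    [PseudoMetricSpace Y] {F : ι → X → Y} {f : X → Y} {l : Filter ι} {C : Set X} {O : Set Y}
    (h : TendstoUniformlyOn F f l C) (hC : IsCompact C) (hf : ContinuousOn f C) (hO : IsOpen O)
    (hfO : MapsTo f C O) : ∀ᶠ i in l, MapsTo (F i) C O := by
  obtain ⟨ε, hε, hsub⟩ :=
    (hC.image_of_continuousOn hf).exists_thickening_subset_open hO hfO.image_subset
  filter_upwards [Metric.tendstoUniformlyOn_iff.1 h ε hε] with i hi x hx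
  exact hsub (mem_thickening_iff.2 ⟨f x, mem_image_of_mem f hx, dist_comm (f x) _ ▸ hi x hx⟩)

theorem injOn_of_mul_dist_le_of_norm_sub_lt {E F : Type*} [SeminormedAddCommGroup E]
    [SeminormedAddCommGroup F] {Φ Ψ : E → F} {C : Set E} {c : ℝ}
    (hΦ : ∀ x ∈ C, ∀ y ∈ C, c * dist x y ≤ dist (Φ x) (Φ y))
    (hΨ : ∀ x ∈ C, ∀ y ∈ C, x ≠ y → ‖(Ψ - Φ) y - (Ψ - Φ) x‖ < c * ‖y - x‖) : InjOn Ψ C := by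
  intro x hx y hy hxy
  by_contra hne
  have hlt := hΨ x hx y hy hne
  rw [Pi.sub_apply, Pi.sub_apply, hxy, sub_sub_sub_cancel_left, ← dist_eq_norm, ← dist_eq_norm,
    dist_comm y] at hlt
  exact (hΦ x hx y hy).not_gt hlt

section Perturbation

variable {E F : Type*} [NormedAddCommGroup E] [NormedSpace ℝ E] [NormedAddCommGroup F]
  [NormedSpace ℝ F]

theorem ContinuousLinearMap.bijective_iff_mem_range_coe [CompleteSpace E]
    [CompleteSpace F] {f : E →L[ℝ] F} :
    Bijective f ↔ f ∈ range ((↑) : (E ≃L[ℝ] F) → E →L[ℝ] F) :=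
  ⟨fun h => ⟨.ofBijective f (LinearMap.ker_eq_bot.2 h.1) (LinearMap.range_eq_top.2 h.2),
    ContinuousLinearEquiv.coe_ofBijective _ _ _⟩, by rintro ⟨e, rfl⟩; exact e.bijective⟩

theorem HasStrictFDerivAt.exists_antilipschitzWith {f : E → F} {f' : E ≃L[ℝ] F} {a : E}
    (hf : HasStrictFDerivAt f (f' : E →L[ℝ] F) a) :
    ∃ K : ℝ≥0, ∃ s ∈ 𝓝 a, AntilipschitzWith K (s.domRestrict f) := by
  obtain ⟨s, has, hso, happ⟩ := hf.approximates_deriv_on_open_nhds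
  exact ⟨_, s, hso.mem_nhds has, happ.antilipschitz
    (f'.subsingleton_or_nnnorm_symm_pos.imp id fun h => NNReal.half_lt_self (inv_pos.2 h).ne')⟩

theorem norm_sub_lt_mul_norm_sub_of_norm_fderiv_le {g : E → F} {C : Set E} {c ρ L : ℝ}
    (hρ : 0 < ρ) (hg : ∀ z ∈ cthickening ρ C, DifferentiableAt ℝ g z)
    (hDg : ∀ z ∈ cthickening ρ C, ‖fderiv ℝ g z‖ ≤ L) (hL : L < c)
    (hsmall : ∀ x ∈ C, ‖g x‖ < c * ρ / 2) {x y : E} (hx : x ∈ C) (hy : y ∈ C) (hxy : x ≠ y) :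
    ‖g y - g x‖ < c * ‖y - x‖ := by
  have hyx : 0 < ‖y - x‖ := norm_pos_iff.2 (sub_ne_zero.2 hxy.symm)
  rcases le_or_gt ‖y - x‖ ρ with hnear | hfar
  · have hball : closedBall x ρ ⊆ cthickening ρ C := closedBall_subset_cthickening hx ρ
    calc ‖g y - g x‖ ≤ L * ‖y - x‖ :=
          (convex_closedBall x ρ).norm_image_sub_le_of_norm_fderiv_le
            (fun z hz => hg z (hball hz)) (fun z hz => hDg z (hball hz))
            (mem_closedBall_self hρ.le) (by rwa [mem_closedBall, dist_eq_norm])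
      _ < c * ‖y - x‖ := by gcongr
  · have hc : 0 < c := by nlinarith [hsmall x hx, norm_nonneg (g x)]
    calc ‖g y - g x‖ ≤ ‖g y‖ + ‖g x‖ := norm_sub_le _ _
      _ < c * ρ := by linarith [hsmall x hx, hsmall y hy]
      _ < c * ‖y - x‖ := by gcongr

theorem eventually_injOn_and_bijective_fderiv [CompleteSpace E] [CompleteSpace F] {ι : Type*}
    {l : Filter ι} {Φ : E → F} {Φs : ι → E → F} {C N : Set E} (hΦ : ContDiff ℝ 1 Φ)
    (hΦs : ∀ i, Differentiable ℝ (Φs i)) (hC : IsCompact C) (hinj : InjOn Φ C)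
    (hder : ∀ x ∈ C, Bijective (fderiv ℝ Φ x)) (hN : N ∈ 𝓝ˢ C)
    (h₀ : TendstoUniformlyOn Φs Φ l C)
    (h₁ : TendstoUniformlyOn (fun i => fderiv ℝ (Φs i)) (fderiv ℝ Φ) l N) :
    ∀ᶠ i in l, InjOn (Φs i) C ∧ ∀ x ∈ C, Bijective (fderiv ℝ (Φs i) x) := by
  have hequiv : MapsTo (fderiv ℝ Φ) C (range ((↑) : (E ≃L[ℝ] F) → E →L[ℝ] F)) :=
    fun x hx => ContinuousLinearMap.bijective_iff_mem_range_coe.1 (hder x hx)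
  obtain ⟨c, hc, hexpand⟩ := hC.exists_pos_mul_dist_le_dist hΦ.continuous hinj fun a ha => by
    obtain ⟨e, he⟩ := hequiv ha
    exact HasStrictFDerivAt.exists_antilipschitzWith
      (he ▸ hΦ.contDiffAt.hasStrictFDerivAt one_ne_zero)
  obtain ⟨ρ, hρ, hρN⟩ := (hasBasis_nhdsSet_cthickening hC).mem_iff.1 hN
  have hdiff : ∀ i, Differentiable ℝ (Φs i - Φ) := fun i =>
    (hΦs i).sub (hΦ.differentiable one_ne_zero)
  filter_upwards [Metric.tendstoUniformlyOn_iff.1 h₀ (c * ρ / 2) (by positivity),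
    Metric.tendstoUniformlyOn_iff.1 (h₁.mono hρN) (c / 2) (by positivity),
    (h₁.mono (subset_of_mem_nhdsSet hN)).eventually_mapsTo hC
      (hΦ.continuous_fderiv one_ne_zero).continuousOn ContinuousLinearEquiv.isOpen hequiv]
    with i hsmall hDsmall hunit
  refine ⟨injOn_of_mul_dist_le_of_norm_sub_lt hexpand fun x hx y hy hxy =>
    norm_sub_lt_mul_norm_sub_of_norm_fderiv_le hρ (fun z _ => hdiff i z) (fun z hz => ?_)
      (half_lt_self hc) (fun x hx => ?_) hx hy hxy,
    fun x hx => ContinuousLinearMap.bijective_iff_mem_range_coe.2 (hunit hx)⟩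
  · rw [fderiv_sub ((hΦs i) z) (hΦ.differentiable one_ne_zero z), ← dist_eq_norm, dist_comm]
    exact (hDsmall z hz).le
  · rw [Pi.sub_apply, ← dist_eq_norm, dist_comm]
    exact hsmall x hx

end Perturbation

theorem stmt_13_general (n : ℕ)
    (Φ : EuclideanSpace ℝ (Fin n) → EuclideanSpace ℝ (Fin n))
    (hΦ : ContDiff ℝ 1 Φ)
    (U : Set (EuclideanSpace ℝ (Fin n)))
    (hinjU : Set.InjOn Φ U) (hderU : ∀ x ∈ U, Function.Bijective (fderiv ℝ Φ x))
    (Φseq : ℕ → EuclideanSpace ℝ (Fin n) → EuclideanSpace ℝ (Fin n))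
    (hΦseq : ∀ k, ContDiff ℝ 1 (Φseq k))
    (hconv : ∀ C : Set (EuclideanSpace ℝ (Fin n)), IsCompact C →
        TendstoUniformlyOn Φseq Φ atTop C ∧
        TendstoUniformlyOn (fun k => fderiv ℝ (Φseq k)) (fderiv ℝ Φ) atTop C)
    (V : Set (EuclideanSpace ℝ (Fin n)))
    (hVc : IsCompact (closure V)) (hVU : closure V ⊆ U) :
    ∃ k₀ : ℕ, ∀ k ≥ k₀, Set.InjOn (Φseq k) V ∧
      ∀ x ∈ V, Function.Bijective (fderiv ℝ (Φseq k) x) := by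
  have hclosure := eventually_injOn_and_bijective_fderiv hΦ
    (fun k => (hΦseq k).differentiable one_ne_zero) hVc (hinjU.mono hVU)
    (fun x hx => hderU x (hVU hx)) (cthickening_mem_nhdsSet _ one_pos)
    (hconv _ hVc).1 (hconv _ hVc.cthickening).2
  obtain ⟨k₀, hk₀⟩ := eventually_atTop.1 hclosure
  exact ⟨k₀, fun k hk => ⟨(hk₀ k hk).1.mono subset_closure,
    fun x hx => (hk₀ k hk).2 x (subset_closure hx)⟩⟩

theorem stmt_13 (n : ℕ) (hn : 0 < n)
    (Φ : EuclideanSpace ℝ (Fin n) → EuclideanSpace ℝ (Fin n))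
    (hΦ : ContDiff ℝ 1 Φ)
    (K : Set (EuclideanSpace ℝ (Fin n))) (hK : IsCompact K)
    (hinj : Set.InjOn Φ K)
    (hder : ∀ x ∈ K, Function.Bijective (fderiv ℝ Φ x))
    (U : Set (EuclideanSpace ℝ (Fin n))) (hU : IsOpen U) (hKU : K ⊆ U)
    (hinjU : Set.InjOn Φ U) (hderU : ∀ x ∈ U, Function.Bijective (fderiv ℝ Φ x))
    (Φseq : ℕ → EuclideanSpace ℝ (Fin n) → EuclideanSpace ℝ (Fin n))
    (hΦseq : ∀ k, ContDiff ℝ 1 (Φseq k))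
    (hconv : ∀ C : Set (EuclideanSpace ℝ (Fin n)), IsCompact C →
        TendstoUniformlyOn Φseq Φ atTop C ∧
        TendstoUniformlyOn (fun k => fderiv ℝ (Φseq k)) (fderiv ℝ Φ) atTop C)
    (V : Set (EuclideanSpace ℝ (Fin n))) (hV : IsOpen V)
    (hVc : IsCompact (closure V)) (hVU : closure V ⊆ U) :
    ∃ k₀ : ℕ, ∀ k ≥ k₀, Set.InjOn (Φseq k) V ∧
      ∀ x ∈ V, Function.Bijective (fderiv ℝ (Φseq k) x) :=
  stmt_13_general n Φ hΦ U hinjU hderU Φseq hΦseq hconv V hVc hVU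
end

section
/- Define the planar curve L(s) = ( cos(s)(-2C + (π/2)sin²(s)), sin(s)(π + 2C - (π/2)sin²(s)) ) for a constant C with 0 < C < π/4. Then L has exactly four points in [0, 2π) where the derivative L'(s) vanishes, namely the solutions of sin²(s) = (2 + 4C/π)/3. -/
open Real Set

/-!
Both coordinates of `L'(s)` carry the common factor `π + 2C - (3π/2) sin² s`, times `sin s` and
`cos s` respectively; since `sin s` and `cos s` never vanish together, `L'(s) = 0` exactly when
`sin² s = k := (2 + 4C/π)/3`. As `0 < k < 1`, with `a = arcsin √k ∈ (0, π/2)` the solutions in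
`[0, 2π)` are the four distinct points `a`, `π - a`, `π + a`, `2π - a`.
-/

lemma hasDerivAt_curve (C s : ℝ) :
    HasDerivAt (fun x => (cos x * (-2 * C + π / 2 * sin x ^ 2),
        sin x * (π + 2 * C - π / 2 * sin x ^ 2)))
      ((π + 2 * C - 3 * π / 2 * sin s ^ 2) • (sin s, cos s)) s := by
  have h₁ := (hasDerivAt_cos s).mul
    ((((hasDerivAt_sin s).pow 2).const_mul (π / 2)).const_add (-2 * C))
  have h₂ := (hasDerivAt_sin s).mul
    ((((hasDerivAt_sin s).pow 2).const_mul (π / 2)).const_sub (π + 2 * C))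
  refine (h₁.prodMk h₂).congr_deriv ?_
  ext
  · simp only [Prod.smul_mk, smul_eq_mul, Pi.pow_apply, Nat.cast_ofNat]
    linear_combination π * sin s * sin_sq_add_cos_sq s
  · simp only [Prod.smul_mk, smul_eq_mul, Pi.pow_apply, Nat.cast_ofNat]
    ring

lemma smul_sin_cos_eq_zero_iff (a s : ℝ) : a • (sin s, cos s) = 0 ↔ a = 0 := by
  refine ⟨fun h => (smul_eq_zero.mp h).resolve_right fun hsc => ?_, fun h => by simp [h]⟩
  have h := sin_sq_add_cos_sq s
  simp only [Prod.mk_eq_zero] at hsc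
  simp [hsc] at h

lemma deriv_curve_eq_zero_iff (C s : ℝ) :
    deriv (fun x => (cos x * (-2 * C + π / 2 * sin x ^ 2),
        sin x * (π + 2 * C - π / 2 * sin x ^ 2))) s = 0 ↔
      sin s ^ 2 = (2 + 4 * C / π) / 3 := by
  rw [(hasDerivAt_curve C s).deriv, smul_sin_cos_eq_zero_iff]
  field_simp
  constructor <;> intro h <;> linarith

lemma eq_arcsin_or_eq_pi_sub_arcsin {t c : ℝ} (ht₀ : 0 ≤ t) (htπ : t ≤ π) (h : sin t = c) :
    t = arcsin c ∨ t = π - arcsin c := by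
  rcases le_or_gt t (π / 2) with hle | hgt
  · left
    rw [← h, arcsin_sin (by linarith [pi_pos]) hle]
  · right
    rw [← h, ← sin_pi_sub, arcsin_sin (by linarith) (by linarith)]
    ring

lemma setOf_sin_sq_eq_sq {c : ℝ} (hc₀ : 0 < c) (hc₁ : c ≤ 1) :
    {s ∈ Ico 0 (2 * π) | sin s ^ 2 = c ^ 2} =
      {arcsin c, π - arcsin c, π + arcsin c, 2 * π - arcsin c} := by
  have ha₀ : 0 < arcsin c := arcsin_pos.mpr hc₀
  have haπ : arcsin c ≤ π / 2 := arcsin_le_pi_div_two c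
  have hsin : sin (arcsin c) = c := sin_arcsin (by linarith) hc₁
  ext s
  simp only [mem_ofPred_eq, mem_Ico, mem_insert_iff, mem_singleton_iff]
  constructor
  · rintro ⟨⟨hs₀, hs2π⟩, hsq⟩
    rcases sq_eq_sq_iff_eq_or_eq_neg.mp hsq with hpos | hneg
    · have hsπ : s ≤ π := by
        by_contra! hπs
        have := sin_nonneg_of_nonneg_of_le_pi (x := s - π) (by linarith) (by linarith)
        rw [sin_sub_pi] at this
        linarith
      rcases eq_arcsin_or_eq_pi_sub_arcsin hs₀ hsπ hpos with h | h <;> simp [h]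
    · have hπs : π ≤ s := by
        by_contra! hsπ
        linarith [sin_nonneg_of_nonneg_of_le_pi hs₀ hsπ.le]
      have hshift : sin (s - π) = c := by rw [sin_sub_pi, hneg, neg_neg]
      rcases eq_arcsin_or_eq_pi_sub_arcsin (by linarith) (by linarith) hshift with h | h
      · right; right; left; linarith
      · right; right; right; linarith
  · have hπ := pi_pos
    rintro (rfl | rfl | rfl | rfl)
    · exact ⟨⟨ha₀.le, by linarith⟩, by rw [hsin]⟩
    · exact ⟨⟨by linarith, by linarith⟩, by rw [sin_pi_sub, hsin]⟩
    · exact ⟨⟨by linarith, by linarith⟩, by rw [add_comm, sin_add_pi, hsin, neg_sq]⟩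
    · refine ⟨⟨by linarith, by linarith⟩, ?_⟩
      rw [sin_sub, sin_two_pi, cos_two_pi, hsin]
      ring

lemma ncard_quadrant_reflections {a : ℝ} (ha₀ : 0 < a) (haπ : a < π / 2) :
    ({a, π - a, π + a, 2 * π - a} : Set ℝ).ncard = 4 := by
  rw [ncard_insert_of_notMem, ncard_insert_of_notMem, ncard_pair]
  all_goals simp only [mem_insert_iff, mem_singleton_iff, not_or, ne_eq]
  all_goals (repeat' apply And.intro) <;> intro h <;> linarith

lemma ncard_setOf_sin_sq_eq {k : ℝ} (hk₀ : 0 < k) (hk₁ : k < 1) :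
    {s ∈ Ico 0 (2 * π) | sin s ^ 2 = k}.ncard = 4 := by
  have hc₁ : √k < 1 := (sqrt_lt' one_pos).mpr (by rwa [one_pow])
  rw [← sq_sqrt hk₀.le, setOf_sin_sq_eq_sq (sqrt_pos.mpr hk₀) hc₁.le]
  exact ncard_quadrant_reflections (arcsin_pos.mpr (sqrt_pos.mpr hk₀))
    (arcsin_lt_pi_div_two.mpr hc₁)

theorem stmt_14 (C : ℝ) (hC : C ∈ Set.Ioo 0 (π / 4))
    (L : ℝ → ℝ × ℝ)
    (hL : ∀ s, L s = (Real.cos s * (-2 * C + (π / 2) * Real.sin s ^ 2),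
                      Real.sin s * (π + 2 * C - (π / 2) * Real.sin s ^ 2))) :
    {s ∈ Set.Ico 0 (2 * π) | deriv L s = 0}
      = {s ∈ Set.Ico 0 (2 * π) | Real.sin s ^ 2 = (2 + 4 * C / π) / 3} ∧
    {s ∈ Set.Ico 0 (2 * π) | deriv L s = 0}.ncard = 4 := by
  obtain ⟨hC₀, hCπ⟩ := hC
  have hcrit : {s ∈ Ico 0 (2 * π) | deriv L s = 0} =
      {s ∈ Ico 0 (2 * π) | sin s ^ 2 = (2 + 4 * C / π) / 3} := by
    obtain rfl : L = _ := funext hL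
    simp only [deriv_curve_eq_zero_iff]
  refine ⟨hcrit, hcrit ▸ ncard_setOf_sin_sq_eq (by positivity) ?_⟩
  have : 4 * C / π < 1 := by rw [div_lt_one pi_pos]; linarith
  linarith
end

section
/- For 0 < C < π/4, let θ_d ∈ (0, π/2) satisfy sin(θ_d) = 2√(C/π). Then the curve L(s) = ( cos(s)(-2C + (π/2)sin²(s)), sin(s)(π + 2C - (π/2)sin²(s)) ) satisfies L(θ_d) = L(π - θ_d), i.e. it has a double point. -/
/-!
Since `sin (π - s) = sin s` and `cos (π - s) = -cos s`, the points `L s` and `L (π - s)` differ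
only in the sign of the first coordinate. Its factor `-2C + (π/2) sin² s` vanishes at `θd`,
because `sin² θd = 4C/π`.
-/

open Real Set

theorem cos_mul_sin_pi_sub_eq_of_eq_zero (f g : ℝ → ℝ) {s : ℝ} (hf : f (sin s) = 0) :
    (cos (π - s) * f (sin (π - s)), sin (π - s) * g (sin (π - s))) =
      (cos s * f (sin s), sin s * g (sin s)) := by
  rw [sin_pi_sub, cos_pi_sub, hf, mul_zero, mul_zero]

theorem sq_eq_four_mul_of_eq_two_mul_sqrt {x y : ℝ} (hy : 0 ≤ y) (h : x = 2 * √y) :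
    x ^ 2 = 4 * y := by
  rw [h, mul_pow, sq_sqrt hy]
  norm_num

theorem stmt_15_general (C : ℝ) (hC : C ∈ Set.Ioo 0 (π / 4))
    (θd : ℝ) (hsin : Real.sin θd = 2 * Real.sqrt (C / π))
    (L : ℝ → ℝ × ℝ)
    (hL : ∀ s, L s = (Real.cos s * (-2 * C + (π / 2) * Real.sin s ^ 2),
                      Real.sin s * (π + 2 * C - (π / 2) * Real.sin s ^ 2))) :
    L θd = L (π - θd) := by
  have hsq : sin θd ^ 2 = 4 * (C / π) :=
    sq_eq_four_mul_of_eq_two_mul_sqrt (div_nonneg hC.1.le pi_pos.le) hsin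
  have hcoeff : -2 * C + (π / 2) * sin θd ^ 2 = 0 := by
    rw [hsq]
    field_simp
    ring
  rw [hL, hL]
  exact (cos_mul_sin_pi_sub_eq_of_eq_zero (fun x => -2 * C + (π / 2) * x ^ 2)
    (fun x => π + 2 * C - (π / 2) * x ^ 2) hcoeff).symm

theorem stmt_15 (C : ℝ) (hC : C ∈ Set.Ioo 0 (π / 4))
    (θd : ℝ) (hθd : θd ∈ Set.Ioo 0 (π / 2)) (hsin : Real.sin θd = 2 * Real.sqrt (C / π))
    (L : ℝ → ℝ × ℝ)
    (hL : ∀ s, L s = (Real.cos s * (-2 * C + (π / 2) * Real.sin s ^ 2),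
                      Real.sin s * (π + 2 * C - (π / 2) * Real.sin s ^ 2))) :
    L θd = L (π - θd) :=
  stmt_15_general C hC θd hsin L hL
end

section
/- Let D be the determinant of the 2×2 matrix whose columns are (e^{tA₀})·σ'(s') and A₀·p + b₀ - (A₀·p - b₀) = 2b₀, where A₀ = [[0,-1],[1,0]], b₀ = (0,1)ᵀ, σ(s') = 2r̄·e^{i(π-s')} (as a planar curve), and p = e^{tA₀}σ(s') is a point where two pendulum trajectories meet. Then D = 4r̄·sin(s' - t); moreover, if t = -2arctan( r̄ sin(s') / (1 - r̄ cos(s')) ) (with r̄ ∈ (0,1), s' ∈ (π, 2π)), then D = 4r̄(1 - r̄²)sin(s') / ((1 - r̄cos(s'))² + (r̄ sin(s'))²). -/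
/-!
Since `σ'(s') = 2r̄ (sin s', cos s')`, rotating it by `t` gives first component
`2r̄ sin (s' - t)`, and the determinant against `2 b₀` doubles it. On the overlap curve
`s' - t = s' + 2 arctan (b / a)` with `a = 1 - r̄ cos s'`, `b = r̄ sin s'`; the half-angle
formulas `sin (2 arctan x) = 2x / (1 + x²)`, `cos (2 arctan x) = (1 - x²) / (1 + x²)` then turn
`sin (s' - t)` into `(1 - r̄²) sin s' / (a² + b²)`.
-/

open Real Matrix

namespace Real

theorem sin_two_mul_arctan (x : ℝ) : sin (2 * arctan x) = 2 * x / (1 + x ^ 2) := by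
  have hcos : cos (arctan x) ≠ 0 := (cos_arctan_pos x).ne'
  have hsin : sin (arctan x) = x * cos (arctan x) := by
    rw [← div_eq_iff hcos, ← tan_eq_sin_div_cos, tan_arctan]
  rw [sin_two_mul, hsin, show 2 * (x * cos (arctan x)) * cos (arctan x) =
    2 * x * cos (arctan x) ^ 2 by ring, cos_sq_arctan]
  ring

theorem cos_two_mul_arctan (x : ℝ) : cos (2 * arctan x) = (1 - x ^ 2) / (1 + x ^ 2) := by
  have h : (1 : ℝ) + x ^ 2 ≠ 0 := by positivity
  rw [cos_two_mul, cos_sq_arctan]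
  field_simp
  ring

theorem sin_add_two_mul_arctan_div {a : ℝ} (b s : ℝ) (ha : a ≠ 0) :
    sin (s + 2 * arctan (b / a)) = ((a ^ 2 - b ^ 2) * sin s + 2 * a * b * cos s) / (a ^ 2 + b ^ 2) := by
  have hden : a ^ 2 + b ^ 2 ≠ 0 := by positivity
  rw [sin_add, sin_two_mul_arctan, cos_two_mul_arctan]
  field_simp

theorem sin_add_two_mul_arctan_div_one_sub_mul_cos {r : ℝ} (s : ℝ) (h : 1 - r * cos s ≠ 0) :
    sin (s + 2 * arctan (r * sin s / (1 - r * cos s))) =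
      (1 - r ^ 2) * sin s / ((1 - r * cos s) ^ 2 + (r * sin s) ^ 2) := by
  rw [sin_add_two_mul_arctan_div _ _ h]
  congr 1
  linear_combination (-(r ^ 2 * sin s)) * sin_sq_add_cos_sq s

end Real

theorem hasDerivAt_circle_pi_sub (c u : ℝ) :
    HasDerivAt (fun u : ℝ => (c * cos (π - u), c * sin (π - u))) (c * sin u, c * cos u) u := by
  have hin : HasDerivAt (fun u : ℝ => π - u) (-1) u := by
    simpa using (hasDerivAt_id u).const_sub π
  exact (((hasDerivAt_cos (π - u)).comp u hin).const_mul c).congr_deriv (by simp) |>.prodMk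
    ((((hasDerivAt_sin (π - u)).comp u hin).const_mul c).congr_deriv (by simp))

theorem stmt_19_general (r : ℝ) (hr : r ∈ Set.Ioo 0 1) (s' t : ℝ)
    (σ σ' : ℝ → ℝ × ℝ)
    (hσ : ∀ u, σ u = (2 * r * Real.cos (π - u), 2 * r * Real.sin (π - u)))
    (hσ' : ∀ u, HasDerivAt σ (σ' u) u)
    (rot : ℝ → ℝ × ℝ → ℝ × ℝ)
    (hrot : ∀ θ p, rot θ p = (p.1 * Real.cos θ - p.2 * Real.sin θ,
                              p.1 * Real.sin θ + p.2 * Real.cos θ))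
    (D : ℝ) (hD : D = (!![(rot t (σ' s')).1, 0; (rot t (σ' s')).2, 2] : Matrix (Fin 2) (Fin 2) ℝ).det) :
    D = 4 * r * Real.sin (s' - t) ∧
    (t = -2 * Real.arctan (r * Real.sin s' / (1 - r * Real.cos s')) →
      D = 4 * r * (1 - r ^ 2) * Real.sin s' /
            ((1 - r * Real.cos s') ^ 2 + (r * Real.sin s') ^ 2)) := by
  have hσ's : σ' s' = (2 * r * sin s', 2 * r * cos s') :=
    (hσ' s').unique (funext hσ ▸ hasDerivAt_circle_pi_sub (2 * r) s')
  have hDsin : D = 4 * r * sin (s' - t) := by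
    rw [hD, det_fin_two_of, hrot, hσ's, sin_sub]
    ring
  refine ⟨hDsin, fun ht => ?_⟩
  have ha : 1 - r * cos s' ≠ 0 := by
    nlinarith [cos_le_one s', neg_one_le_cos s', hr.1, hr.2]
  rw [hDsin, ht, neg_mul, sub_neg_eq_add, sin_add_two_mul_arctan_div_one_sub_mul_cos s' ha]
  ring

theorem stmt_19 (r : ℝ) (hr : r ∈ Set.Ioo 0 1) (s' t : ℝ) (hs' : s' ∈ Set.Ioo π (2 * π))
    (σ σ' : ℝ → ℝ × ℝ)
    (hσ : ∀ u, σ u = (2 * r * Real.cos (π - u), 2 * r * Real.sin (π - u)))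
    (hσ' : ∀ u, HasDerivAt σ (σ' u) u)
    (rot : ℝ → ℝ × ℝ → ℝ × ℝ)
    (hrot : ∀ θ p, rot θ p = (p.1 * Real.cos θ - p.2 * Real.sin θ,
                              p.1 * Real.sin θ + p.2 * Real.cos θ))
    (D : ℝ) (hD : D = (!![(rot t (σ' s')).1, 0; (rot t (σ' s')).2, 2] : Matrix (Fin 2) (Fin 2) ℝ).det) :
    D = 4 * r * Real.sin (s' - t) ∧
    (t = -2 * Real.arctan (r * Real.sin s' / (1 - r * Real.cos s')) →
      D = 4 * r * (1 - r ^ 2) * Real.sin s' /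
            ((1 - r * Real.cos s') ^ 2 + (r * Real.sin s') ^ 2)) :=
  stmt_19_general r hr s' t σ σ' hσ hσ' rot hrot D hD
end
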